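/- arXiv:1708.08090 — 7 statements merged into one kernel-verified Lean document; each statement's English description precedes it below -/
import Mathlib

section
/- Let V be a square integer matrix of size 2g written in block form V = [[0, Q],[R, S]] where the upper-left g×g block is zero. Then det(t^{1/2} V - t^{-1/2} Vᵀ) = det(t Q - Rᵀ) · det(t^{-1} Q - Rᵀ). Equivalently, setting f(t) = det(t Q - Rᵀ), the Laurent polynomial ∇(t) = det(t V - Vᵀ)·t^{-g} satisfies ∇(t) = f(t) f(t^{-1}). -/
/-!
Since the upper-left block of `V` vanishes, so does that of `t V - Vᵀ`, whose determinant is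
therefore `± det(t Q - Rᵀ) · det(t R - Qᵀ)`. Transposing the second factor and pulling out `-t`
gives `det(t R - Qᵀ) = (-t)^g det(t⁻¹ Q - Rᵀ)`; the two signs cancel and `t^g` is absorbed by the
normalisation `t^{-g}`.
-/

open Matrix LaurentPolynomial

namespace Matrix

variable {n R : Type*} [CommRing R]

theorem smul_fromBlocks_zero₁₁_sub_transpose (t : R) (B C D : Matrix n n R) :
    t • fromBlocks 0 B C D - (fromBlocks 0 B C D)ᵀ =
      fromBlocks 0 (t • B - Cᵀ) (t • C - Bᵀ) (t • D - Dᵀ) := by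
  simp [fromBlocks_transpose, fromBlocks_smul, sub_eq_add_neg, fromBlocks_neg, fromBlocks_add]

variable [Fintype n] [DecidableEq n]

theorem det_fromBlocks_zero_one_one_zero :
    (fromBlocks 0 1 1 0 : Matrix (n ⊕ n) (n ⊕ n) R).det = (-1) ^ Fintype.card n := by
  have hfactor : (fromBlocks 0 1 1 0 : Matrix (n ⊕ n) (n ⊕ n) R) =
      fromBlocks 0 1 1 1 * fromBlocks 1 (-1) 0 1 := by
    simp [fromBlocks_multiply]
  rw [hfactor, det_mul, det_fromBlocks_one₂₂, det_fromBlocks_zero₂₁]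
  simp [det_neg]

theorem det_fromBlocks_zero₁₁ (B C D : Matrix n n R) :
    (fromBlocks 0 B C D).det = (-1) ^ Fintype.card n * (B.det * C.det) := by
  have hswap : fromBlocks 0 B C D * fromBlocks 0 1 1 0 = fromBlocks B 0 D C := by
    simp [fromBlocks_multiply]
  have h := congrArg det hswap
  rw [det_mul, det_fromBlocks_zero_one_one_zero, det_fromBlocks_zero₁₂] at h
  rw [← h, mul_comm, mul_assoc, ← pow_add, ← two_mul, pow_mul]
  simp

theorem det_smul_sub_transpose_of_mul_eq_one {s t : R} (hst : s * t = 1) (A B : Matrix n n R) :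
    (t • A - Bᵀ).det = (-t) ^ Fintype.card n * (s • B - Aᵀ).det := by
  have hfactor : t • Aᵀ - B = (-t) • (s • B - Aᵀ) := by
    rw [smul_sub, smul_smul, neg_mul, mul_comm, hst, neg_one_smul, neg_smul, sub_neg_eq_add,
      neg_add_eq_sub]
  rw [← det_transpose, transpose_sub, transpose_smul, transpose_transpose, hfactor, det_smul]

end Matrix

/-- Fox–Milnor type factorization: for a `2g × 2g` integer matrix
`V = [[0, Q],[R, S]]` with vanishing upper-left `g × g` block, the balanced
directed Alexander polynomial `∇(t) = t^{-g}·det(t V - Vᵀ)` factors as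
`f(t)·f(t⁻¹)` with `f(t) = det(t Q - Rᵀ)`. -/
theorem directed_alexander_block_factorization (g : ℕ)
    (Q R S : Matrix (Fin g) (Fin g) ℤ) :
    (T (-(g : ℤ)) : LaurentPolynomial ℤ) *
      ((T 1 : LaurentPolynomial ℤ) •
          (Matrix.fromBlocks (0 : Matrix (Fin g) (Fin g) ℤ) Q R S).map
            (Int.cast : ℤ → LaurentPolynomial ℤ) -
        ((Matrix.fromBlocks (0 : Matrix (Fin g) (Fin g) ℤ) Q R S).map
            (Int.cast : ℤ → LaurentPolynomial ℤ))ᵀ).det =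
    ((T 1 : LaurentPolynomial ℤ) • Q.map (Int.cast : ℤ → LaurentPolynomial ℤ) -
        (R.map (Int.cast : ℤ → LaurentPolynomial ℤ))ᵀ).det *
    ((T (-1) : LaurentPolynomial ℤ) • Q.map (Int.cast : ℤ → LaurentPolynomial ℤ) -
        (R.map (Int.cast : ℤ → LaurentPolynomial ℤ))ᵀ).det := by
  have hT : (T (-1) * T 1 : LaurentPolynomial ℤ) = 1 := by rw [← T_add]; simp
  rw [fromBlocks_map, Matrix.map_zero _ Int.cast_zero, smul_fromBlocks_zero₁₁_sub_transpose,
    det_fromBlocks_zero₁₁, det_smul_sub_transpose_of_mul_eq_one hT (R.map _) (Q.map _),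
    Fintype.card_fin, neg_pow (T 1 : LaurentPolynomial ℤ), T_pow, mul_one]
  set f := ((T 1 : LaurentPolynomial ℤ) • Q.map (Int.cast : ℤ → LaurentPolynomial ℤ) -
    (R.map (Int.cast : ℤ → LaurentPolynomial ℤ))ᵀ).det
  set f' := ((T (-1) : LaurentPolynomial ℤ) • Q.map (Int.cast : ℤ → LaurentPolynomial ℤ) -
    (R.map (Int.cast : ℤ → LaurentPolynomial ℤ))ᵀ).det
  have hsign : ((-1) ^ g * (-1) ^ g : LaurentPolynomial ℤ) = 1 := by rw [← mul_pow]; simp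
  have hTg : (T (-(g : ℤ)) * T (g : ℤ) : LaurentPolynomial ℤ) = 1 := by rw [← T_add]; simp
  linear_combination (T (-(g : ℤ)) * T (g : ℤ) * f * f') * hsign + f * f' * hTg
end

section
/- Let V⁺, V⁻ be 2g×2g real matrices each having a (g-k)×(g-k) block of zeros in the upper-left corner (0 ≤ k ≤ g), and let ω ≠ 1 be a complex number of modulus 1 such that the Hermitian matrix M = (1-ω)V^± + (1-ω̄)(V^±)ᵀ is nonsingular. Then |sig(M)| ≤ 2k. -/
open Matrix

/-- The signature of a Hermitian matrix: the number of positive eigenvalues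
minus the number of negative eigenvalues. -/
noncomputable def matSig {𝕜 : Type*} [RCLike 𝕜] {n : Type*} [Fintype n] [DecidableEq n]
    {A : Matrix n n 𝕜} (hA : A.IsHermitian) : ℤ := by
  classical
  exact ((Finset.univ.filter (fun i => 0 < hA.eigenvalues i)).card : ℤ) -
    ((Finset.univ.filter (fun i => hA.eigenvalues i < 0)).card : ℤ)

/-!
In eigen-coordinates `y = U⋆x` a Hermitian form reads `x⋆Ax = ∑ λᵢ |yᵢ|²`. Suppose `A`
vanishes on the coordinate subspace `W` spanned by `S` and all `λᵢ ≠ 0`. A vector of `W`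
whose coordinates `yᵢ` with `λᵢ > 0` all vanish has `0 = ∑_{λᵢ < 0} λᵢ |yᵢ|²`, hence is
zero. So `x ↦ (yᵢ)_{λᵢ > 0}` is injective on `W`, giving `p ≥ #S` positive eigenvalues, and
likewise `q ≥ #S` negative ones; as `p + q = N`, `|p - q| ≤ N - 2 #S`. Here `N = 2g` and
`#S = g - k`.
-/

open Finset

lemma Matrix.dotProduct_mulVec_eq_zero_of_support {R n : Type*} [Fintype n]
    [NonUnitalNonAssocSemiring R] {A : Matrix n n R} {S : Set n}
    (hS : ∀ i ∈ S, ∀ j ∈ S, A i j = 0) {v w : n → R} (hv : ∀ i ∉ S, v i = 0)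
    (hw : ∀ i ∉ S, w i = 0) :
    v ⬝ᵥ A *ᵥ w = 0 := by
  refine sum_eq_zero fun i _ => ?_
  by_cases hi : i ∈ S
  · refine mul_eq_zero_of_right _ <| sum_eq_zero fun j _ => ?_
    by_cases hj : j ∈ S
    · simp [hS i hi j hj]
    · simp [hw j hj]
  · simp [hv i hi]

namespace Matrix.IsHermitian

variable {𝕜 n : Type*} [RCLike 𝕜] [Fintype n] [DecidableEq n] {A : Matrix n n 𝕜}

lemma star_dotProduct_mulVec_eq_sum (hA : A.IsHermitian) (x : n → 𝕜) :
    star x ⬝ᵥ A *ᵥ x = ((∑ i, hA.eigenvalues i *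
      ‖(star (hA.eigenvectorUnitary : Matrix n n 𝕜) *ᵥ x) i‖ ^ 2 : ℝ) : 𝕜) := by
  set U : Matrix n n 𝕜 := (hA.eigenvectorUnitary : Matrix n n 𝕜)
  conv_lhs => rw [hA.spectral_theorem, Unitary.conjStarAlgAut_apply]
  have hU : star x ᵥ* U = star (star U *ᵥ x) := by
    rw [star_mulVec, ← star_eq_conjTranspose, star_star]
  rw [← mulVec_mulVec, ← mulVec_mulVec, dotProduct_mulVec, hU]
  push_cast
  simp only [dotProduct, mulVec_diagonal, Pi.star_apply, Function.comp_apply, RCLike.star_def]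
  refine sum_congr rfl fun i _ => ?_
  rw [← RCLike.conj_mul]
  ring

theorem card_le_card_of_isotropic (hA : A.IsHermitian) {S T : Finset n}
    (hS : ∀ i ∈ S, ∀ j ∈ S, A i j = 0) {ε : ℝ}
    (hT : ∀ i ∉ T, 0 < ε * hA.eigenvalues i) :
    #S ≤ #T := by
  set U : Matrix n n 𝕜 := (hA.eigenvectorUnitary : Matrix n n 𝕜)
  let f : (S → 𝕜) →ₗ[𝕜] T → 𝕜 := LinearMap.funLeft 𝕜 𝕜 Subtype.val ∘ₗ
    (star U).mulVecLin ∘ₗ Function.ExtendByZero.linearMap 𝕜 Subtype.val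
  suffices hf : Function.Injective f by
    simpa using LinearMap.finrank_le_finrank_of_injective hf
  rw [injective_iff_map_eq_zero]
  intro v hv
  set x : n → 𝕜 := Function.extend Subtype.val v 0
  have hx : ∀ i ∉ (S : Set n), x i = 0 := fun i hi =>
    Function.extend_apply' _ _ _ fun ⟨s, hs⟩ => hi (hs ▸ s.2)
  set y := star U *ᵥ x
  have hyT : ∀ i ∈ T, y i = 0 := fun i hi => congrFun hv ⟨i, hi⟩
  have hsum : ∑ i, ε * hA.eigenvalues i * ‖y i‖ ^ 2 = 0 := by
    have h := (hA.star_dotProduct_mulVec_eq_sum x).symm.trans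
      (dotProduct_mulVec_eq_zero_of_support hS (fun i hi => by simp [hx i hi]) hx)
    rw [RCLike.ofReal_eq_zero] at h
    simp only [mul_assoc, ← mul_sum]
    exact mul_eq_zero_of_right ε h
  have hterm : ∀ i ∈ univ, 0 ≤ ε * hA.eigenvalues i * ‖y i‖ ^ 2 := by
    intro i _
    by_cases hi : i ∈ T
    · simp [hyT i hi]
    · exact mul_nonneg (hT i hi).le (by positivity)
  have hy : y = 0 := by
    funext i
    by_cases hi : i ∈ T
    · exact hyT i hi
    · have h := (sum_eq_zero_iff_of_nonneg hterm).mp hsum i (mem_univ i)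
      simpa [(hT i hi).ne'] using h
  have hx0 : x = 0 := by
    rw [← one_mulVec x, ← Unitary.coe_mul_star_self hA.eigenvectorUnitary, ← mulVec_mulVec]
    exact (congrArg _ hy).trans (mulVec_zero _)
  funext s
  simpa [x, Subtype.val_injective.extend_apply] using congrFun hx0 s

lemma eigenvalues_ne_zero_of_det_ne_zero (hA : A.IsHermitian) (hdet : A.det ≠ 0) (i : n) :
    hA.eigenvalues i ≠ 0 := by
  rw [hA.det_eq_prod_eigenvalues, prod_ne_zero_iff] at hdet
  exact_mod_cast hdet i (mem_univ i)

end Matrix.IsHermitian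

theorem abs_matSig_le {𝕜 n : Type*} [RCLike 𝕜] [Fintype n] [DecidableEq n]
    {A : Matrix n n 𝕜} (hA : A.IsHermitian) (hdet : A.det ≠ 0) {S : Finset n}
    (hS : ∀ i ∈ S, ∀ j ∈ S, A i j = 0) :
    |matSig hA| ≤ Fintype.card n - 2 * #S := by
  have hne := hA.eigenvalues_ne_zero_of_det_ne_zero hdet
  have hpos : #S ≤ #{i | 0 < hA.eigenvalues i} :=
    hA.card_le_card_of_isotropic hS (ε := -1) fun i hi => by
      simp only [mem_filter_univ, not_lt] at hi
      simpa using lt_of_le_of_ne hi (hne i)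
  have hneg : #S ≤ #{i | hA.eigenvalues i < 0} :=
    hA.card_le_card_of_isotropic hS (ε := 1) fun i hi => by
      simp only [mem_filter_univ, not_lt] at hi
      simpa using lt_of_le_of_ne hi (hne i).symm
  have htotal :
      #{i | 0 < hA.eigenvalues i} + #{i | hA.eigenvalues i < 0} = Fintype.card n := by
    have hnot :
        ({i | ¬0 < hA.eigenvalues i} : Finset n) = ({i | hA.eigenvalues i < 0} : Finset n) :=
      filter_congr fun i _ => by simp [le_iff_lt_or_eq, hne i]
    rw [← hnot, card_filter_add_card_filter_not, card_univ]
  unfold matSig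
  rw [abs_le]
  constructor <;> omega

theorem omega_signature_bound_general (g k : ℕ)
    (V : Matrix (Fin (2 * g)) (Fin (2 * g)) ℝ)
    (hblock : ∀ i j : Fin (2 * g), (i : ℕ) < g - k → (j : ℕ) < g - k → V i j = 0)
    (ω : ℂ)
    (hM : ((1 - ω) • V.map Complex.ofReal +
        (1 - (starRingEnd ℂ) ω) • (V.map Complex.ofReal)ᵀ).IsHermitian)
    (hdet : ((1 - ω) • V.map Complex.ofReal +
        (1 - (starRingEnd ℂ) ω) • (V.map Complex.ofReal)ᵀ).det ≠ 0) :
    |matSig hM| ≤ 2 * (k : ℤ) := by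
  have h := abs_matSig_le hM hdet (S := {i | (i : ℕ) < g - k}) fun i hi j hj => by
    simp only [mem_filter_univ] at hi hj
    simp [hblock i j hi hj, hblock j i hj hi]
  rw [Fin.card_filter_val_lt, Fintype.card_fin] at h
  omega

/-- If a `2g × 2g` real matrix `V` has a `(g-k) × (g-k)` block of zeros in its
upper-left corner and `ω ≠ 1` is a unit complex number such that the Hermitian
matrix `M = (1-ω)V + (1-ω̄)Vᵀ` is nonsingular, then `|sig(M)| ≤ 2k`. -/
theorem omega_signature_bound (g k : ℕ) (hkg : k ≤ g)
    (V : Matrix (Fin (2 * g)) (Fin (2 * g)) ℝ)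
    (hblock : ∀ i j : Fin (2 * g), (i : ℕ) < g - k → (j : ℕ) < g - k → V i j = 0)
    (ω : ℂ) (hω : ‖ω‖ = 1) (hω1 : ω ≠ 1)
    (hM : ((1 - ω) • V.map Complex.ofReal +
        (1 - (starRingEnd ℂ) ω) • (V.map Complex.ofReal)ᵀ).IsHermitian)
    (hdet : ((1 - ω) • V.map Complex.ofReal +
        (1 - (starRingEnd ℂ) ω) • (V.map Complex.ofReal)ᵀ).det ≠ 0) :
    |matSig hM| ≤ 2 * (k : ℤ) :=
  omega_signature_bound_general g k V hblock ω hM hdet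
end

section
/- Let V⁺(K₊) = [[a, u],[v, W]] and V⁺(K₋) = [[a+1, u],[v, W]] be (n+1)×(n+1) matrices over ℤ[t^{1/2}, t^{-1/2}] data differing only in their (1,1) entry, and define ∇_±(t) = det(t^{1/2} V(K_±) - t^{-1/2} V(K_±)ᵀ) and ∇₀(t) = det(t^{1/2} W - t^{-1/2} Wᵀ). Then ∇₊(t) - ∇₋(t) = (t^{-1/2} - t^{1/2}) ∇₀(t). -/
/-! The matrices `t^{1/2} V - t^{-1/2} Vᵀ` for `V(K₊)` and `V(K₋)` differ only in their corner
entry, by `t^{-1/2} - t^{1/2}`. The determinant is affine in the first row, so the two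
determinants differ by that amount times the complementary minor, which is `∇₀`. -/

open Matrix LaurentPolynomial

/-- The directed Alexander polynomial of an integer matrix, computed in
`ℤ[t^{1/2}, t^{-1/2}]` modelled as Laurent polynomials in the formal
variable `T = t^{1/2}`: `∇(t) = det(t^{1/2} M - t^{-1/2} Mᵀ)`. -/
noncomputable def nablaPoly {α : Type*} [Fintype α] [DecidableEq α]
    (M : Matrix α α ℤ) : LaurentPolynomial ℤ :=
  ((T 1 : LaurentPolynomial ℤ) • M.map (Int.cast : ℤ → LaurentPolynomial ℤ) -
    (T (-1) : LaurentPolynomial ℤ) • (M.map (Int.cast : ℤ → LaurentPolynomial ℤ))ᵀ).det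

namespace Matrix

variable {R m n : Type*}

theorem smul_fromBlocks_sub_smul_transpose [Ring R] (p q : R) (A : Matrix m m R)
    (B : Matrix m n R) (C : Matrix n m R) (D : Matrix n n R) :
    p • fromBlocks A B C D - q • (fromBlocks A B C D)ᵀ =
      fromBlocks (p • A - q • Aᵀ) (p • B - q • Cᵀ) (p • C - q • Bᵀ) (p • D - q • Dᵀ) := by
  simp only [fromBlocks_transpose, fromBlocks_smul, sub_eq_add_neg, fromBlocks_neg, fromBlocks_add]

theorem det_fromBlocks_sub_det_fromBlocks_of_fin_one [CommRing R] [Fintype n] [DecidableEq n]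
    (A A' : Matrix (Fin 1) (Fin 1) R) (B : Matrix (Fin 1) n R) (C : Matrix n (Fin 1) R)
    (D : Matrix n n R) :
    (fromBlocks A B C D).det - (fromBlocks A' B C D).det = (A 0 0 - A' 0 0) * D.det := by
  have first_row : fromBlocks A B C D = (fromBlocks A' B C D).updateRow (Sum.inl 0)
      (fromBlocks A' B C D (Sum.inl 0) + Pi.single (Sum.inl 0) (A 0 0 - A' 0 0)) := by
    ext i j
    rcases i with i | i <;> rcases j with j | j <;>
      simp [updateRow_apply, Fin.fin_one_eq_zero]
  have corner_row : (fromBlocks A' B C D).updateRow (Sum.inl 0)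
      (Pi.single (Sum.inl 0) (A 0 0 - A' 0 0)) =
        fromBlocks (of fun _ _ => A 0 0 - A' 0 0) 0 C D := by
    ext i j
    rcases i with i | i <;> rcases j with j | j <;>
      simp [updateRow_apply, Fin.fin_one_eq_zero]
  rw [first_row, det_updateRow_add, updateRow_eq_self, corner_row, det_fromBlocks_zero₁₂,
    det_fin_one, of_apply, add_sub_cancel_left]

end Matrix

/-- Skein relation for directed Alexander polynomials: if `V(K₊)` and `V(K₋)`
differ only in their `(1,1)` entry (by `1`), then
`∇₊(t) - ∇₋(t) = (t^{-1/2} - t^{1/2}) ∇₀(t)` where `∇₀` comes from the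
common block `W`. -/
theorem directed_alexander_skein (n : ℕ) (a : ℤ)
    (u : Matrix (Fin 1) (Fin n) ℤ) (v : Matrix (Fin n) (Fin 1) ℤ)
    (W : Matrix (Fin n) (Fin n) ℤ) :
    nablaPoly (Matrix.fromBlocks (Matrix.of fun _ _ => a) u v W) -
      nablaPoly (Matrix.fromBlocks (Matrix.of fun _ _ => a + 1) u v W) =
    ((T (-1) : LaurentPolynomial ℤ) - T 1) * nablaPoly W := by
  simp only [nablaPoly, fromBlocks_map, smul_fromBlocks_sub_smul_transpose]
  rw [det_fromBlocks_sub_det_fromBlocks_of_fin_one]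
  congr 1
  simp only [Matrix.sub_apply, Matrix.smul_apply, map_apply, transpose_apply, of_apply,
    smul_eq_mul, T_mul, Int.cast_add, Int.cast_one]
  ring
end

section
/- For any polynomial Δ(t) ∈ ℤ[t] with Δ(1) = 1, writing Δ(t) = 1 + a₁(t-1) + ⋯ + a_n(t-1)^n with aᵢ ∈ ℤ, let A be the n×n companion-type matrix with subdiagonal 1's and last column (-a_n, -a_{n-1}, …, -a₁)ᵀ. Then det((t-1)A - I) = ±Δ(t) (equality up to sign, i.e., up to multiplication by a unit). -/
open Matrix Polynomial

/-!
Write `A` for the companion-type matrix with subdiagonal `1`'s and last column `c`, and put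
`M = s • A - 1`. Expanding `det M` along the first row, only the entries `M 0 0 = -1` and
`M 0 last = s * c 0` survive. The first minor is the same kind of matrix one size smaller, with
last column `c ∘ succ`; the second is upper triangular with `s` on the diagonal. This recursion
gives `det M = (-1)ⁿ (1 - ∑ᵢ c (rev i) s^(i+1))` over any commutative ring, and with `s = t - 1`,
`c = -(a ∘ rev)` the bracket is `Δ(t)`.
-/

namespace Matrix

variable {R : Type*} [CommRing R] {n : ℕ}

def companion (c : Fin n → R) : Matrix (Fin n) (Fin n) R :=
  of fun i j => if (j : ℕ) = n - 1 then c i else if (i : ℕ) = (j : ℕ) + 1 then 1 else 0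

theorem companion_map {S : Type*} [CommRing S] (f : R →+* S) (c : Fin n → R) :
    (companion c).map f = companion fun i => f (c i) := by
  ext i j
  simp only [companion, map_apply, of_apply]
  split_ifs <;> simp

theorem companion_zero_apply (c : Fin (n + 2) → R) (j : Fin (n + 2)) :
    companion c 0 j = if j = Fin.last _ then c 0 else 0 := by
  have hlast : (j : ℕ) = n + 1 ↔ j = Fin.last _ := by rw [Fin.ext_iff, Fin.val_last]
  simp [companion, hlast]

theorem companion_succ_castSucc (c : Fin (n + 2) → R) (i j : Fin (n + 1)) :
    companion c i.succ j.castSucc = if i = j then 1 else 0 := by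
  have hlast : (j : ℕ) ≠ n + 1 := by omega
  simp [companion, hlast, Fin.ext_iff]

theorem smul_companion_sub_one_submatrix_succ (s : R) (c : Fin (n + 1) → R) :
    (s • companion c - 1).submatrix Fin.succ Fin.succ = s • companion (c ∘ Fin.succ) - 1 := by
  ext i j
  have hlast : (j : ℕ) + 1 = n ↔ (j : ℕ) = n - 1 := by omega
  simp [companion, one_apply, hlast]

theorem det_smul_companion_sub_one_submatrix_succ_castSucc (s : R) (c : Fin (n + 2) → R) :
    ((s • companion c - 1).submatrix Fin.succ Fin.castSucc).det = s ^ (n + 1) := by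
  rw [det_of_isUpperTriangular]
  · simp [companion_succ_castSucc, Fin.castSucc_lt_succ.ne']
  · intro i j (hji : j < i)
    have hne : i.succ ≠ j.castSucc := ((Fin.castSucc_lt_castSucc_iff.2 hji).trans
      Fin.castSucc_lt_succ).ne'
    simp [companion_succ_castSucc, hji.ne', hne]

theorem det_smul_companion_sub_one_succ_succ (s : R) (c : Fin (n + 2) → R) :
    (s • companion c - 1).det =
      -(s • companion (c ∘ Fin.succ) - 1).det + (-1) ^ (n + 1) * s ^ (n + 2) * c 0 := by
  have hlast : (0 : Fin (n + 2)) ≠ Fin.last _ := Fin.last_pos.ne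
  have h00 : (s • companion c - 1) 0 0 = -1 := by simp [companion_zero_apply, hlast]
  have h0last : (s • companion c - 1) 0 (Fin.last _) = s * c 0 := by
    simp [companion_zero_apply, one_apply_ne hlast]
  rw [det_succ_row_zero, Fintype.sum_eq_add 0 (Fin.last _) hlast]
  · rw [h00, h0last, Fin.succAbove_zero, Fin.succAbove_last, smul_companion_sub_one_submatrix_succ,
      det_smul_companion_sub_one_submatrix_succ_castSucc, Fin.val_zero, Fin.val_last]
    ring
  · rintro j ⟨hj0, hjl⟩
    simp [companion_zero_apply, hjl, one_apply_ne hj0.symm]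

theorem det_smul_companion_sub_one (s : R) (c : Fin n → R) :
    (s • companion c - 1).det = (-1) ^ n * (1 - ∑ i : Fin n, c i.rev * s ^ ((i : ℕ) + 1)) := by
  induction n with
  | zero => simp
  | succ n ih =>
    cases n with
    | zero => simp [companion, det_unique, mul_comm]
    | succ n =>
      rw [det_smul_companion_sub_one_succ_succ, ih,
        Fin.sum_univ_castSucc fun i : Fin (n + 2) => c i.rev * s ^ ((i : ℕ) + 1)]
      simp only [Function.comp_apply, Fin.rev_castSucc, Fin.rev_last, Fin.val_castSucc, Fin.val_last]
      ring

end Matrix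

/-- Realization of Alexander polynomials via companion matrices: if
`Δ(t) = 1 + a₁(t-1) + ⋯ + a_n(t-1)^n` (with `a i` denoting `a_{i+1}`) and `A`
is the companion-type matrix with subdiagonal `1`'s and last column
`(-a_n, …, -a₁)ᵀ`, then `det((t-1)A - I) = ±Δ(t)`. -/
theorem companion_realizes_alexander (n : ℕ) (a : Fin n → ℤ) :
    (((X : Polynomial ℤ) - 1) •
        (Matrix.of fun i j : Fin n =>
          if (j : ℕ) = n - 1 then -a i.rev
          else if (i : ℕ) = (j : ℕ) + 1 then 1 else 0).map Polynomial.C -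
      (1 : Matrix (Fin n) (Fin n) (Polynomial ℤ))).det =
      (1 + ∑ i : Fin n, Polynomial.C (a i) * ((X : Polynomial ℤ) - 1) ^ ((i : ℕ) + 1)) ∨
    (((X : Polynomial ℤ) - 1) •
        (Matrix.of fun i j : Fin n =>
          if (j : ℕ) = n - 1 then -a i.rev
          else if (i : ℕ) = (j : ℕ) + 1 then 1 else 0).map Polynomial.C -
      (1 : Matrix (Fin n) (Fin n) (Polynomial ℤ))).det =
      -(1 + ∑ i : Fin n, Polynomial.C (a i) * ((X : Polynomial ℤ) - 1) ^ ((i : ℕ) + 1)) := by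
  have hdet : ((X - 1 : ℤ[X]) • (companion fun i => -a i.rev).map C - 1).det =
      (-1) ^ n * (1 + ∑ i : Fin n, C (a i) * (X - 1) ^ ((i : ℕ) + 1)) := by
    rw [companion_map, det_smul_companion_sub_one]
    simp [Fin.rev_rev, sub_eq_add_neg]
  rcases neg_one_pow_eq_or ℤ[X] n with h | h
  · exact Or.inl (hdet.trans (by rw [h, one_mul]))
  · exact Or.inr (hdet.trans (by rw [h, neg_one_mul]))
end

section
/- Let β be a nondegenerate skew-symmetric bilinear form on U = ℤ^{2g} with Gram matrix of determinant 1, and let L ⊆ U be a primitive rank-g submodule with β(x,y) = 0 for all x,y ∈ L (i.e., L isotropic). Then L = L^⊥ and there exists a symplectic basis a₁,…,a_g,b₁,…,b_g of U with a₁,…,a_g a basis of L. -/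
/-!
Since `L` is primitive, `ℤ^{2g} ⧸ L` is torsion-free, hence free, so `L` is a direct summand and
the coordinate functionals of a basis `a` of `L` extend to `ℤ^{2g}`. As `det C = 1`, every
functional is `β(·, v)` for some `v`, which gives `b'` with `β(aᵢ, b'ⱼ) = δᵢⱼ`; subtracting
suitable multiples of the `aₖ` from the `b'ⱼ` makes them isotropic. Finally, a symplectic family
of `2g` vectors in a torsion-free module of rank `2g` is a basis: a vector orthogonal to it would
make a dependent family of `2g + 1` vectors in which pairing kills every other coefficient.
Expanding `y ∈ L^⊥` in this basis shows `y ∈ span a = L`.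
-/

open Matrix

theorem Submodule.isTorsionFree_quotient {R M : Type*} [Ring R] [Nontrivial R] [AddCommGroup M]
    [Module R M] (L : Submodule R M) (hL : ∀ (x : M) (r : R), r ≠ 0 → r • x ∈ L → x ∈ L) :
    Module.IsTorsionFree R (M ⧸ L) := by
  refine .of_smul_eq_zero fun r x hx => ?_
  obtain ⟨x, rfl⟩ := Submodule.Quotient.mk_surjective L x
  rw [← Submodule.Quotient.mk_smul, Submodule.Quotient.mk_eq_zero] at hx
  simpa only [or_iff_not_imp_left, Submodule.Quotient.mk_eq_zero] using fun hr => hL x r hr hx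

theorem Submodule.exists_linearProj_of_projective_quotient {R M : Type*} [Ring R] [AddCommGroup M]
    [Module R M] (L : Submodule R M) [Module.Projective R (M ⧸ L)] :
    ∃ π : M →ₗ[R] L, ∀ x : L, π x = x := by
  obtain ⟨s, hs⟩ := L.mkQ.exists_rightInverse_of_surjective L.range_mkQ
  have hmem : ∀ x, x - s (L.mkQ x) ∈ L := fun x => by
    rw [← Submodule.Quotient.mk_eq_zero, ← mkQ_apply, map_sub, ← LinearMap.comp_apply L.mkQ s, hs,
      LinearMap.id_apply, sub_self]
  refine ⟨(LinearMap.id - s ∘ₗ L.mkQ).codRestrict L hmem, fun x => Subtype.ext ?_⟩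
  simp [(Submodule.Quotient.mk_eq_zero L).mpr x.2]

namespace LinearMap.BilinForm

variable {R M ι : Type*} [CommRing R] [AddCommGroup M] [Module R M]

structure IsSymplecticFamily [DecidableEq ι] (B : LinearMap.BilinForm R M) (a b : ι → M) :
    Prop where
  left_isotropic : ∀ i j, B (a i) (a j) = 0
  right_isotropic : ∀ i j, B (b i) (b j) = 0
  pairing : ∀ i j, B (a i) (b j) = if i = j then 1 else 0

namespace IsSymplecticFamily

variable [Fintype ι] [DecidableEq ι] {B : LinearMap.BilinForm R M} {a b : ι → M}

theorem apply_add_sum (h : IsSymplecticFamily B a b) (c d : ι → R) (j : ι) :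
    B (a j) (∑ i, c i • a i + ∑ i, d i • b i) = d j := by
  simp [h.left_isotropic, h.pairing]

theorem add_sum_apply (h : IsSymplecticFamily B a b) (c d : ι → R) (j : ι) :
    B (∑ i, c i • a i + ∑ i, d i • b i) (b j) = c j := by
  simp [h.right_isotropic, h.pairing]

theorem linearIndependent (h : IsSymplecticFamily B a b) :
    LinearIndependent R (Sum.elim a b) := by
  rw [Fintype.linearIndependent_iff]
  intro f hf
  simp only [Fintype.sum_sum_type, Sum.elim_inl, Sum.elim_inr] at hf
  rintro (j | j)
  · rw [← h.add_sum_apply (fun i => f (.inl i)) (fun i => f (.inr i)) j, hf, map_zero,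
      LinearMap.zero_apply]
  · rw [← h.apply_add_sum (fun i => f (.inl i)) (fun i => f (.inr i)) j, hf, map_zero]

variable [IsDomain R] [Module.Finite R M] [Module.IsTorsionFree R M]

theorem eq_zero_of_orthogonal (h : IsSymplecticFamily B a b)
    (hM : Module.finrank R M = 2 * Fintype.card ι) {v : M}
    (hva : ∀ i, B (a i) v = 0) (hvb : ∀ i, B v (b i) = 0) : v = 0 := by
  have hdep : ¬ LinearIndependent R fun o : Option (ι ⊕ ι) => o.elim v (Sum.elim a b) := by
    intro hli
    have := hli.fintype_card_le_finrank
    simp only [Fintype.card_option, Fintype.card_sum] at this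
    omega
  obtain ⟨f, hf, o, ho⟩ := Fintype.not_linearIndependent_iff.mp hdep
  simp only [Fintype.sum_option, Option.elim_none, Option.elim_some, Fintype.sum_sum_type,
    Sum.elim_inl, Sum.elim_inr] at hf
  have hc : ∀ i, f (some (.inl i)) = 0 := fun i => by
    have := congr(B $hf (b i))
    rwa [map_add, LinearMap.add_apply, LinearMap.map_smul₂, hvb, smul_zero, zero_add,
      h.add_sum_apply (fun i => f (some (.inl i))), map_zero, LinearMap.zero_apply] at this
  have hd : ∀ i, f (some (.inr i)) = 0 := fun i => by
    have := congr(B (a i) $hf)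
    rwa [map_add, map_smul, hva, smul_zero, zero_add,
      h.apply_add_sum _ (fun i => f (some (.inr i))), map_zero] at this
  have hnone : f none ≠ 0 := by
    rcases o with _ | i | i
    exacts [ho, absurd (hc i) ho, absurd (hd i) ho]
  simpa [hc, hd, hnone] using hf

theorem sum_add_sum_eq (h : IsSymplecticFamily B a b)
    (hM : Module.finrank R M = 2 * Fintype.card ι) (u : M) :
    ∑ i, B u (b i) • a i + ∑ i, B (a i) u • b i = u := by
  refine (sub_eq_zero.mp (h.eq_zero_of_orthogonal hM (fun j => ?_) (fun j => ?_))).symm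
  · rw [map_sub, h.apply_add_sum, sub_self]
  · rw [map_sub, LinearMap.sub_apply, h.add_sum_apply, sub_self]

theorem span_eq_top (h : IsSymplecticFamily B a b)
    (hM : Module.finrank R M = 2 * Fintype.card ι) :
    Submodule.span R (Set.range (Sum.elim a b)) = ⊤ := by
  refine Submodule.eq_top_iff'.mpr fun u => h.sum_add_sum_eq hM u ▸ add_mem ?_ ?_ <;>
    refine Submodule.sum_mem _ fun i _ => Submodule.smul_mem _ _ (Submodule.subset_span ?_)
  exacts [⟨.inl i, rfl⟩, ⟨.inr i, rfl⟩]

noncomputable def basis (h : IsSymplecticFamily B a b)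
    (hM : Module.finrank R M = 2 * Fintype.card ι) : Module.Basis (ι ⊕ ι) R M :=
  .mk h.linearIndependent (h.span_eq_top hM).ge

@[simp]
theorem coe_basis (h : IsSymplecticFamily B a b)
    (hM : Module.finrank R M = 2 * Fintype.card ι) : ⇑(h.basis hM) = Sum.elim a b :=
  Module.Basis.coe_mk _ _

theorem mem_span_of_orthogonal (h : IsSymplecticFamily B a b)
    (hM : Module.finrank R M = 2 * Fintype.card ι) {y : M} (hy : ∀ i, B (a i) y = 0) :
    y ∈ Submodule.span R (Set.range a) := by
  rw [← h.sum_add_sum_eq hM y]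
  simp only [hy, zero_smul, Finset.sum_const_zero, add_zero]
  exact Submodule.sum_mem _ fun i _ => Submodule.smul_mem _ _ (Submodule.subset_span ⟨i, rfl⟩)

end IsSymplecticFamily

theorem exists_dual_family [DecidableEq ι] {B : LinearMap.BilinForm R M}
    (hB : Function.Surjective B.flip) {L : Submodule R M} [Module.Projective R (M ⧸ L)]
    (bL : Module.Basis ι R L) :
    ∃ b' : ι → M, ∀ i j, B (bL i) (b' j) = if i = j then 1 else 0 := by
  obtain ⟨π, hπ⟩ := L.exists_linearProj_of_projective_quotient
  choose b' hb' using fun j => hB (bL.coord j ∘ₗ π)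
  refine ⟨b', fun i j => ?_⟩
  simpa [hπ, Finsupp.single_apply] using LinearMap.congr_fun (hb' j) (bL i)

theorem exists_isSymplecticFamily [Fintype ι] [LinearOrder ι] {B : LinearMap.BilinForm R M}
    (hB : B.IsAlt) {a b' : ι → M} (ha : ∀ i j, B (a i) (a j) = 0)
    (hab' : ∀ i j, B (a i) (b' j) = if i = j then 1 else 0) :
    ∃ b, IsSymplecticFamily B a b := by
  -- subtracting `∑ k, t j k • a k` from each `b' j` changes `B (b' i) (b' j)` by `t j i - t i j`
  let t : ι → ι → R := fun j k => if j < k then B (b' j) (b' k) else 0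
  let b : ι → M := fun j => b' j - ∑ k, t j k • a k
  have hb'a : ∀ i k, B (b' i) (a k) = -if k = i then 1 else 0 := fun i k => by
    rw [← hB.neg_eq, hab']
  have hab : ∀ i j, B (a i) (b j) = if i = j then 1 else 0 := fun i j => by
    simp [b, ha, hab']
  have hb'b : ∀ i j, B (b' i) (b j) = B (b' i) (b' j) + t j i := fun i j => by
    simp [b, hb'a]
  refine ⟨b, ha, fun i j => ?_, hab⟩
  have hbb : B (b i) (b j) = B (b' i) (b' j) + t j i - t i j := by
    simp [b, hb'b, hab]
  rcases lt_trichotomy i j with hij | rfl | hij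
  · simp [hbb, t, hij, hij.not_gt]
  · simp [hbb, hB.self_eq_zero]
  · simp [hbb, t, hij, hij.not_gt, ← hB.neg_eq (b' i)]

end LinearMap.BilinForm

namespace Matrix

variable {R n : Type*} [CommRing R] [Fintype n] [DecidableEq n]

theorem isAlt_toLinearMap₂' [NoZeroDivisors R] [CharZero R] {C : Matrix n n R} (hC : Cᵀ = -C) :
    (toLinearMap₂' R C : LinearMap.BilinForm R (n → R)).IsAlt := by
  intro x
  rw [toLinearMap₂'_apply', ← CharZero.eq_neg_self_iff]
  conv_lhs =>
    rw [dotProduct_mulVec, ← mulVec_transpose, hC, neg_mulVec, neg_dotProduct, dotProduct_comm]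

theorem surjective_flip_toLinearMap₂' {C : Matrix n n R} (hC : IsUnit C.det) :
    Function.Surjective (toLinearMap₂' R C : LinearMap.BilinForm R (n → R)).flip := by
  intro φ
  refine ⟨C⁻¹ *ᵥ fun k => φ (Pi.single k 1), LinearMap.pi_ext fun i r => ?_⟩
  simp only [LinearMap.flip_apply, toLinearMap₂'_apply', mulVec_mulVec, mul_nonsing_inv C hC,
    one_mulVec, single_dotProduct]
  rw [← smul_eq_mul, ← map_smul, ← Pi.single_smul', smul_eq_mul, mul_one]

end Matrix

/-- If `β` is a nondegenerate skew-symmetric form on `ℤ^{2g}` with Gram matrix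
of determinant `1`, and `L` is a primitive rank-`g` isotropic submodule, then
`L = L^⊥` and there is a symplectic basis `a₁,…,a_g,b₁,…,b_g` of `ℤ^{2g}`
such that `a₁,…,a_g` is a basis of `L`. -/
theorem isotropic_primitive_extends_to_symplectic_basis (g : ℕ)
    (C : Matrix (Fin (2 * g)) (Fin (2 * g)) ℤ)
    (hskew : Cᵀ = -C) (hdet : C.det = 1)
    (L : Submodule ℤ (Fin (2 * g) → ℤ))
    (hprim : ∀ (x : Fin (2 * g) → ℤ) (n : ℤ), n ≠ 0 → n • x ∈ L → x ∈ L)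
    (hrank : Nonempty (Module.Basis (Fin g) ℤ L))
    (hiso : ∀ x ∈ L, ∀ y ∈ L, dotProduct x (C.mulVec y) = 0) :
    (∀ y : Fin (2 * g) → ℤ,
        (∀ x ∈ L, dotProduct x (C.mulVec y) = 0) ↔ y ∈ L) ∧
    ∃ b : Module.Basis (Fin g ⊕ Fin g) ℤ (Fin (2 * g) → ℤ),
      (∀ i, b (Sum.inl i) ∈ L) ∧
      Submodule.span ℤ (Set.range fun i => b (Sum.inl i)) = L ∧
      (∀ i j, dotProduct (b (Sum.inl i)) (C.mulVec (b (Sum.inr j))) =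
        if i = j then 1 else 0) ∧
      (∀ i j, dotProduct (b (Sum.inl i)) (C.mulVec (b (Sum.inl j))) = 0) ∧
      (∀ i j, dotProduct (b (Sum.inr i)) (C.mulVec (b (Sum.inr j))) = 0) := by
  obtain ⟨bL⟩ := hrank
  let B : LinearMap.BilinForm ℤ (Fin (2 * g) → ℤ) := toLinearMap₂' ℤ C
  have hB : ∀ x y, B x y = x ⬝ᵥ C *ᵥ y := toLinearMap₂'_apply' C
  have := L.isTorsionFree_quotient hprim
  obtain ⟨b', hb'⟩ := B.exists_dual_family (surjective_flip_toLinearMap₂' (hdet ▸ isUnit_one)) bL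
  obtain ⟨b, hb⟩ := LinearMap.BilinForm.exists_isSymplecticFamily (isAlt_toLinearMap₂' hskew)
    (fun i j => (hB _ _).trans (hiso _ (bL i).2 _ (bL j).2)) hb'
  have hM : Module.finrank ℤ (Fin (2 * g) → ℤ) = 2 * Fintype.card (Fin g) := by simp
  have hspan : Submodule.span ℤ (Set.range fun i => (bL i : Fin (2 * g) → ℤ)) = L := by
    rw [Set.range_comp', ← Submodule.coe_subtype, Submodule.span_image, bL.span_eq,
      Submodule.map_subtype_top]
  refine ⟨fun y => ⟨fun hy => hspan ▸ hb.mem_span_of_orthogonal hM fun i => ?_,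
    fun hy x hx => hiso x hx y hy⟩, hb.basis hM, ?_⟩
  · exact (hB _ _).trans (hy _ (bL i).2)
  simp only [hb.coe_basis, Sum.elim_inl, Sum.elim_inr, ← hB]
  exact ⟨fun i => (bL i).2, hspan, hb.pairing, hb.left_isotropic, hb.right_isotropic⟩
end

section
/- Define a pair (V⁺,V⁻) of 2g×2g integer matrices to be null-concordant if V⁺ and V⁻ are simultaneously unimodularly congruent to matrices with zero upper-left g×g block. If (V⁺,V⁻) is null-concordant and ω ≠ 1 is a unit complex number with det((1-ω)V^± + (1-ω̄)(V^±)ᵀ) ≠ 0, then sig((1-ω)V^± + (1-ω̄)(V^±)ᵀ) = 0. -/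
open Matrix

/-!
If `Q` is invertible and `Q M Qᴴ` has vanishing upper-left `g × g` block, the first `g` columns
of `Qᴴ` span a `g`-dimensional subspace on which the Hermitian form of `M` vanishes. Such a
subspace meets the span of the eigenvectors of `M` with positive eigenvalues trivially, and
likewise for the negative ones, so each count is at most `2g - g = g`. When `M` is nonsingular
the two counts add up to `2g`, hence both equal `g`.
-/

open scoped ComplexOrder

namespace Matrix

variable {𝕜 : Type*} [RCLike 𝕜] {n k m : Type*} [Fintype n]

theorem star_mulVec_dotProduct_mulVec_mulVec [Fintype m] {R : Type*} [CommRing R] [StarRing R]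
    (A : Matrix n n R) (B : Matrix n m R) (y : m → R) :
    star (B *ᵥ y) ⬝ᵥ (A *ᵥ (B *ᵥ y)) = star y ⬝ᵥ ((Bᴴ * A * B) *ᵥ y) := by
  rw [star_mulVec, ← dotProduct_mulVec, mulVec_mulVec, mulVec_mulVec, Matrix.mul_assoc]

theorem submatrix_conjTranspose_mul_mul_submatrix {R : Type*} [Semiring R] [StarRing R]
    (Q M : Matrix n n R) (e : k → n) :
    (Q.submatrix id e)ᴴ * M * Q.submatrix id e = (Qᴴ * M * Q).submatrix e e := by
  rw [conjTranspose_submatrix, submatrix_mul _ _ _ id _ Function.bijective_id,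
    submatrix_mul _ _ _ id _ Function.bijective_id]
  simp

/-- The columns of `C` span a subspace on which the form of `A` vanishes, those of `B` one on
which it is positive definite; the two meet trivially, so all columns together are independent. -/
theorem card_add_card_le_of_conj_eq_zero_of_posDef [Fintype k] [Fintype m] (A : Matrix n n 𝕜)
    {C : Matrix n k 𝕜} {B : Matrix n m 𝕜} (hC : Cᴴ * A * C = 0)
    (hCinj : Function.Injective C.mulVec) (hB : (Bᴴ * A * B).PosDef) :
    Fintype.card k + Fintype.card m ≤ Fintype.card n := by
  have hinj : Function.Injective (fromCols C B).mulVec := by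
    refine (injective_iff_map_eq_zero (mulVecLin (fromCols C B))).mpr fun v hv => ?_
    set x := v ∘ Sum.inl
    set y := v ∘ Sum.inr
    have hBy : B *ᵥ y = -(C *ᵥ x) := by
      rw [mulVecLin_apply, fromCols_mulVec] at hv
      exact eq_neg_of_add_eq_zero_right hv
    have hy : y = 0 := by
      by_contra hy
      have hpos := hB.dotProduct_mulVec_pos hy
      rw [← star_mulVec_dotProduct_mulVec_mulVec, hBy, mulVec_neg, star_neg, neg_dotProduct,
        dotProduct_neg, neg_neg, star_mulVec_dotProduct_mulVec_mulVec, hC, zero_mulVec,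
        dotProduct_zero] at hpos
      exact hpos.ne rfl
    have hx : x = 0 := hCinj (by rw [mulVec_zero, ← neg_eq_zero, ← hBy, hy, mulVec_zero])
    ext (i | i)
    · exact congrFun hx i
    · exact congrFun hy i
  simpa using (mulVec_injective_iff.mp hinj).fintype_card_le_finrank

namespace IsHermitian

variable [DecidableEq n] {A : Matrix n n 𝕜}

theorem eigenvectorUnitary_submatrix_conj_eq_diagonal [DecidableEq k] (hA : A.IsHermitian)
    {e : k → n} (he : Function.Injective e) :
    ((hA.eigenvectorUnitary : Matrix n n 𝕜).submatrix id e)ᴴ * A *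
        (hA.eigenvectorUnitary : Matrix n n 𝕜).submatrix id e =
      diagonal fun i => (hA.eigenvalues (e i) : 𝕜) := by
  rw [submatrix_conjTranspose_mul_mul_submatrix, ← star_eq_conjTranspose,
    ← Unitary.conjStarAlgAut_star_apply (S := 𝕜), conjStarAlgAut_star_eigenvectorUnitary,
    submatrix_diagonal _ _ he]
  rfl

theorem card_add_card_eigenvalues_pos_le [Fintype k] (hA : A.IsHermitian) {C : Matrix n k 𝕜}
    (hC : Cᴴ * A * C = 0) (hCinj : Function.Injective C.mulVec) :
    Fintype.card k + Fintype.card {i // 0 < hA.eigenvalues i} ≤ Fintype.card n := by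
  refine card_add_card_le_of_conj_eq_zero_of_posDef A hC hCinj
    (B := (hA.eigenvectorUnitary : Matrix n n 𝕜).submatrix id Subtype.val) ?_
  rw [hA.eigenvectorUnitary_submatrix_conj_eq_diagonal Subtype.val_injective,
    posDef_diagonal_iff]
  exact fun i => RCLike.ofReal_pos.mpr i.2

theorem card_add_card_eigenvalues_neg_le [Fintype k] (hA : A.IsHermitian) {C : Matrix n k 𝕜}
    (hC : Cᴴ * A * C = 0) (hCinj : Function.Injective C.mulVec) :
    Fintype.card k + Fintype.card {i // hA.eigenvalues i < 0} ≤ Fintype.card n := by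
  refine card_add_card_le_of_conj_eq_zero_of_posDef (-A) (by simp [hC]) hCinj
    (B := (hA.eigenvectorUnitary : Matrix n n 𝕜).submatrix id Subtype.val) ?_
  rw [Matrix.mul_neg, Matrix.neg_mul,
    hA.eigenvectorUnitary_submatrix_conj_eq_diagonal Subtype.val_injective, diagonal_neg,
    posDef_diagonal_iff]
  exact fun i => neg_pos.mpr (RCLike.ofReal_lt_zero.mpr i.2)

theorem card_eigenvalues_pos_add_card_eigenvalues_neg (hA : A.IsHermitian) (hd : A.det ≠ 0) :
    Fintype.card {i // 0 < hA.eigenvalues i} + Fintype.card {i // hA.eigenvalues i < 0} =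
      Fintype.card n := by
  have hne : ∀ i, hA.eigenvalues i ≠ 0 := fun i hi => hd <| by
    rw [hA.det_eq_prod_eigenvalues]
    exact Finset.prod_eq_zero (Finset.mem_univ i) (by simp [hi])
  rw [Fintype.card_subtype, Fintype.card_subtype, ← Finset.card_univ,
    ← Finset.card_filter_add_card_filter_not (s := Finset.univ) (fun i => 0 < hA.eigenvalues i)]
  congr 2
  exact Finset.filter_congr fun i _ => (not_lt.trans (hne i).le_iff_lt).symm

end IsHermitian

end Matrix

theorem matSig_eq_zero_of_conj_eq_zero {𝕜 : Type*} [RCLike 𝕜] {n k : Type*} [Fintype n]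
    [DecidableEq n] [Fintype k] {A : Matrix n n 𝕜} (hA : A.IsHermitian) (hd : A.det ≠ 0)
    {C : Matrix n k 𝕜} (hC : Cᴴ * A * C = 0) (hCinj : Function.Injective C.mulVec)
    (hcard : Fintype.card n = 2 * Fintype.card k) :
    matSig hA = 0 := by
  have hpos := hA.card_add_card_eigenvalues_pos_le hC hCinj
  have hneg := hA.card_add_card_eigenvalues_neg_le hC hCinj
  have hsum := hA.card_eigenvalues_pos_add_card_eigenvalues_neg hd
  simp only [matSig, ← Fintype.card_subtype]
  omega

section OmegaForm

variable {n k : Type*}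

noncomputable def omegaForm (ω : ℂ) (V : Matrix n n ℤ) : Matrix n n ℂ :=
  (1 - ω) • V.map (Int.cast : ℤ → ℂ) + (1 - (starRingEnd ℂ) ω) • (V.map (Int.cast : ℤ → ℂ))ᵀ

theorem map_mul_omegaForm_mul_conjTranspose [Fintype n] (ω : ℂ) (P V : Matrix n n ℤ) :
    P.map (Int.cast : ℤ → ℂ) * omegaForm ω V * (P.map (Int.cast : ℤ → ℂ))ᴴ =
      omegaForm ω (P * V * Pᵀ) := by
  have hP : (P.map (Int.cast : ℤ → ℂ))ᴴ = (P.map (Int.cast : ℤ → ℂ))ᵀ := by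
    ext; simp
  have hmap : ∀ M N : Matrix n n ℤ,
      (M * N).map (Int.cast : ℤ → ℂ) = M.map Int.cast * N.map Int.cast :=
    fun M N => Matrix.map_mul (f := Int.castRingHom ℂ)
  simp only [omegaForm, hP, hmap, Matrix.mul_add, Matrix.add_mul, Matrix.mul_smul,
    Matrix.smul_mul, transpose_mul, transpose_transpose, transpose_map, Matrix.mul_assoc]

theorem omegaForm_submatrix (ω : ℂ) (V : Matrix n n ℤ) (e : k → n) :
    (omegaForm ω V).submatrix e e = omegaForm ω (V.submatrix e e) :=
  rfl

theorem omegaForm_zero (ω : ℂ) : omegaForm ω (0 : Matrix n n ℤ) = 0 := by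
  simp [omegaForm]

end OmegaForm

theorem omega_signature_vanishes_of_null_concordant_general (g : ℕ)
    (Vp Vm : Matrix (Fin (2 * g)) (Fin (2 * g)) ℤ)
    (hnc : ∃ P : Matrix (Fin (2 * g)) (Fin (2 * g)) ℤ,
      (P.det = 1 ∨ P.det = -1) ∧
      (∀ i j : Fin (2 * g), (i : ℕ) < g → (j : ℕ) < g → (P * Vp * Pᵀ) i j = 0) ∧
      (∀ i j : Fin (2 * g), (i : ℕ) < g → (j : ℕ) < g → (P * Vm * Pᵀ) i j = 0))
    (ω : ℂ)
    (hMp : ((1 - ω) • Vp.map (Int.cast : ℤ → ℂ) +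
        (1 - (starRingEnd ℂ) ω) • (Vp.map (Int.cast : ℤ → ℂ))ᵀ).IsHermitian)
    (hdp : ((1 - ω) • Vp.map (Int.cast : ℤ → ℂ) +
        (1 - (starRingEnd ℂ) ω) • (Vp.map (Int.cast : ℤ → ℂ))ᵀ).det ≠ 0)
    (hMm : ((1 - ω) • Vm.map (Int.cast : ℤ → ℂ) +
        (1 - (starRingEnd ℂ) ω) • (Vm.map (Int.cast : ℤ → ℂ))ᵀ).IsHermitian)
    (hdm : ((1 - ω) • Vm.map (Int.cast : ℤ → ℂ) +
        (1 - (starRingEnd ℂ) ω) • (Vm.map (Int.cast : ℤ → ℂ))ᵀ).det ≠ 0) :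
    matSig hMp = 0 ∧ matSig hMm = 0 := by
  obtain ⟨P, hPdet, hVp, hVm⟩ := hnc
  have hP : IsUnit P := P.isUnit_iff_isUnit_det.mpr (Int.isUnit_iff.mpr hPdet)
  set Q := P.map (Int.cast : ℤ → ℂ)
  have hQ : IsUnit Qᴴ := by
    simpa [Q, Matrix.star_eq_conjTranspose] using (hP.map (Int.castRingHom ℂ).mapMatrix).star
  set e : Fin g → Fin (2 * g) := Fin.castLE (by omega)
  set C := Qᴴ.submatrix id e
  have hCinj : Function.Injective C.mulVec := mulVec_injective_iff.mpr <|
    (linearIndependent_cols_of_isUnit hQ).comp e (Fin.castLE_injective _)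
  have hiso : ∀ V : Matrix (Fin (2 * g)) (Fin (2 * g)) ℤ,
      (∀ i j : Fin (2 * g), (i : ℕ) < g → (j : ℕ) < g → (P * V * Pᵀ) i j = 0) →
      Cᴴ * omegaForm ω V * C = 0 := by
    intro V hV
    have hblock : (P * V * Pᵀ).submatrix e e = 0 := by
      ext i j
      exact hV _ _ (by simp [e]) (by simp [e])
    rw [submatrix_conjTranspose_mul_mul_submatrix, conjTranspose_conjTranspose,
      map_mul_omegaForm_mul_conjTranspose, omegaForm_submatrix, hblock, omegaForm_zero]
  exact ⟨matSig_eq_zero_of_conj_eq_zero hMp hdp (hiso Vp hVp) hCinj (by simp),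
    matSig_eq_zero_of_conj_eq_zero hMm hdm (hiso Vm hVm) hCinj (by simp)⟩

/-- If the pair `(V⁺, V⁻)` of `2g × 2g` integer matrices is null-concordant
(simultaneously unimodularly congruent to matrices with vanishing upper-left
`g × g` block), and `ω ≠ 1` is a unit complex number such that the Hermitian
forms `(1-ω)V^± + (1-ω̄)(V^±)ᵀ` are nonsingular, then their signatures
vanish. -/
theorem omega_signature_vanishes_of_null_concordant (g : ℕ)
    (Vp Vm : Matrix (Fin (2 * g)) (Fin (2 * g)) ℤ)
    (hnc : ∃ P : Matrix (Fin (2 * g)) (Fin (2 * g)) ℤ,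
      (P.det = 1 ∨ P.det = -1) ∧
      (∀ i j : Fin (2 * g), (i : ℕ) < g → (j : ℕ) < g → (P * Vp * Pᵀ) i j = 0) ∧
      (∀ i j : Fin (2 * g), (i : ℕ) < g → (j : ℕ) < g → (P * Vm * Pᵀ) i j = 0))
    (ω : ℂ) (hω : ‖ω‖ = 1) (hω1 : ω ≠ 1)
    (hMp : ((1 - ω) • Vp.map (Int.cast : ℤ → ℂ) +
        (1 - (starRingEnd ℂ) ω) • (Vp.map (Int.cast : ℤ → ℂ))ᵀ).IsHermitian)
    (hdp : ((1 - ω) • Vp.map (Int.cast : ℤ → ℂ) +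
        (1 - (starRingEnd ℂ) ω) • (Vp.map (Int.cast : ℤ → ℂ))ᵀ).det ≠ 0)
    (hMm : ((1 - ω) • Vm.map (Int.cast : ℤ → ℂ) +
        (1 - (starRingEnd ℂ) ω) • (Vm.map (Int.cast : ℤ → ℂ))ᵀ).IsHermitian)
    (hdm : ((1 - ω) • Vm.map (Int.cast : ℤ → ℂ) +
        (1 - (starRingEnd ℂ) ω) • (Vm.map (Int.cast : ℤ → ℂ))ᵀ).det ≠ 0) :
    matSig hMp = 0 ∧ matSig hMm = 0 :=
  omega_signature_vanishes_of_null_concordant_general g Vp Vm hnc ω hMp hdp hMm hdm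
end

section
/- If (V⁺,V⁻) is a null-concordant pair of 2g×2g integer matrices, then each of the symmetrized directed Alexander polynomials ∇^±(t) = det(t V^± - (V^±)ᵀ)·t^{-g} ∈ ℤ[t,t^{-1}] factors as f^±(t)·f^±(t^{-1}) for some f^±(t) ∈ ℤ[t]. -/
/-!
Conjugating by a unimodular `P` multiplies `det (t V - Vᵀ)` by `(det P)² = 1`, so we may assume
`V = [[0, B], [C, D]]` in `g × g` blocks. Then `t V - Vᵀ = [[0, t B - Cᵀ], [t C - Bᵀ, *]]`, and
since `t C - Bᵀ = -t (t⁻¹ B - Cᵀ)ᵀ` its determinant is `t ^ g · f(t) · f(t⁻¹)` with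
`f(t) = det (t B - Cᵀ) ∈ ℤ[t]`.
-/

open Matrix LaurentPolynomial
open scoped Polynomial

section

variable {n R : Type*} [Fintype n] [DecidableEq n] [CommRing R]

theorem Matrix.det_fromBlocks_zero₁₁_s13 (B C D : Matrix n n R) :
    (fromBlocks 0 B C D).det = (-1) ^ Fintype.card n * B.det * C.det := by
  have hfactor : fromBlocks 0 B C D = fromBlocks B 0 (D - C) C * fromBlocks 0 1 1 1 := by
    simp [fromBlocks_multiply]
  rw [hfactor, det_mul, det_fromBlocks_zero₁₂, det_fromBlocks_one₂₂, zero_sub, mul_one, det_neg,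
    det_one]
  ring

theorem Matrix.det_smul_sub_transpose_fromBlocks_zero₁₁ {t s : R} (hts : t * s = 1)
    (B C D : Matrix n n R) :
    s ^ Fintype.card n * (t • fromBlocks 0 B C D - (fromBlocks 0 B C D)ᵀ).det =
      (t • B - Cᵀ).det * (s • B - Cᵀ).det := by
  have hblocks : t • fromBlocks 0 B C D - (fromBlocks 0 B C D)ᵀ =
      fromBlocks 0 (t • B - Cᵀ) (t • C - Bᵀ) (t • D - Dᵀ) := by
    rw [fromBlocks_transpose, fromBlocks_smul, sub_eq_add_neg, fromBlocks_neg, fromBlocks_add]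
    simp only [smul_zero, transpose_zero, neg_zero, add_zero, sub_eq_add_neg]
  have hlower : t • C - Bᵀ = (-t) • (s • B - Cᵀ)ᵀ := by
    rw [transpose_sub, transpose_smul, transpose_transpose, smul_sub, smul_smul, neg_mul, hts,
      neg_smul, one_smul, neg_smul, sub_neg_eq_add, neg_add_eq_sub]
  have hunit : (s * t) ^ Fintype.card n = 1 := by rw [mul_comm, hts, one_pow]
  have hsign : ((-1 : R) ^ Fintype.card n) ^ 2 = 1 := by
    rw [← pow_mul, mul_comm, pow_mul, neg_one_sq, one_pow]
  rw [hblocks, det_fromBlocks_zero₁₁_s13, hlower, det_smul, det_transpose, neg_pow]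
  linear_combination (t • B - Cᵀ).det * (s • B - Cᵀ).det *
    (((-1) ^ Fintype.card n) ^ 2 * hunit + hsign)

theorem Polynomial.eval₂_det_X_smul_sub {S : Type*} [CommRing S] (φ : S →+* R) (x : R)
    (A B : Matrix n n S) :
    ((Polynomial.X : S[X]) • A.map Polynomial.C - (B.map Polynomial.C)ᵀ).det.eval₂ φ x =
      (x • A.map φ - (B.map φ)ᵀ).det := by
  rw [← Polynomial.coe_eval₂RingHom, RingHom.map_det, RingHom.mapMatrix_apply]
  congr 1
  ext i j
  simp [mul_comm x]

theorem Matrix.exists_det_smul_sub_transpose_eq_eval₂_mul_eval₂ {S : Type*} [CommRing S]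
    (φ : S →+* R) {t s : R} (hts : t * s = 1) {A : Matrix (n ⊕ n) (n ⊕ n) S}
    (hA : A.toBlocks₁₁ = 0) :
    ∃ f : S[X], s ^ Fintype.card n * (t • A.map φ - (A.map φ)ᵀ).det =
      f.eval₂ φ t * f.eval₂ φ s := by
  refine ⟨((Polynomial.X : S[X]) • A.toBlocks₁₂.map Polynomial.C -
    (A.toBlocks₂₁.map Polynomial.C)ᵀ).det, ?_⟩
  rw [Polynomial.eval₂_det_X_smul_sub, Polynomial.eval₂_det_X_smul_sub,
    ← det_smul_sub_transpose_fromBlocks_zero₁₁ hts _ _ (A.toBlocks₂₂.map φ),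
    ← Matrix.map_zero _ (map_zero φ), ← hA, ← fromBlocks_map, fromBlocks_toBlocks]

theorem Matrix.det_smul_sub_transpose_conj (t : R) (P V : Matrix n n R) :
    (t • (P * V * Pᵀ) - (P * V * Pᵀ)ᵀ).det = P.det ^ 2 * (t • V - Vᵀ).det := by
  have hconj : t • (P * V * Pᵀ) - (P * V * Pᵀ)ᵀ = P * (t • V - Vᵀ) * Pᵀ := by
    simp only [transpose_mul, transpose_transpose, Matrix.mul_sub, Matrix.sub_mul, Matrix.mul_smul,
      smul_mul, Matrix.mul_assoc]
  rw [hconj, det_mul, det_mul, det_transpose]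
  ring

theorem Matrix.det_smul_sub_transpose_submatrix (t : R) {m : Type*} [Fintype m] [DecidableEq m]
    (e : m ≃ n) (V : Matrix n n R) :
    (t • V.submatrix e e - (V.submatrix e e)ᵀ).det = (t • V - Vᵀ).det :=
  det_submatrix_equiv_self e (t • V - Vᵀ)

end

theorem exists_alexander_factorization_of_congr_zero_block (g : ℕ)
    (V P : Matrix (Fin (2 * g)) (Fin (2 * g)) ℤ) (hP : P.det = 1 ∨ P.det = -1)
    (h0 : ∀ i j : Fin (2 * g), (i : ℕ) < g → (j : ℕ) < g → (P * V * Pᵀ) i j = 0) :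
    ∃ f : ℤ[X], (T (-(g : ℤ)) : ℤ[T;T⁻¹]) *
        ((T 1 : ℤ[T;T⁻¹]) • V.map (Int.cast : ℤ → ℤ[T;T⁻¹]) -
          (V.map (Int.cast : ℤ → ℤ[T;T⁻¹]))ᵀ).det =
      f.eval₂ (Int.castRingHom ℤ[T;T⁻¹]) (T 1) * f.eval₂ (Int.castRingHom ℤ[T;T⁻¹]) (T (-1)) := by
  set φ := Int.castRingHom ℤ[T;T⁻¹]
  let e : Fin g ⊕ Fin g ≃ Fin (2 * g) := finSumFinEquiv.trans (finCongr (two_mul g).symm)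
  have hW : ((P * V * Pᵀ).submatrix e e).toBlocks₁₁ = 0 := by
    ext i j
    exact h0 _ _ (by simp [e]) (by simp [e])
  have hT : (T 1 : ℤ[T;T⁻¹]) * T (-1) = 1 := by rw [← T_add, add_neg_cancel, T_zero]
  have hdetP : (P.map φ).det ^ 2 = 1 := by
    rw [← RingHom.mapMatrix_apply, ← RingHom.map_det, ← map_pow,
      Int.isUnit_sq (Int.isUnit_iff.mpr hP), map_one]
  obtain ⟨f, hf⟩ := exists_det_smul_sub_transpose_eq_eval₂_mul_eval₂ φ hT hW
  refine ⟨f, ?_⟩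
  rw [← hf, ← submatrix_map, det_smul_sub_transpose_submatrix, Matrix.map_mul, Matrix.map_mul,
    transpose_map, det_smul_sub_transpose_conj, hdetP, one_mul, T_pow, Fintype.card_fin,
    mul_neg_one, Int.coe_castRingHom]

/-- If `(V⁺, V⁻)` is a null-concordant pair of `2g × 2g` integer matrices,
then each symmetrized directed Alexander polynomial
`∇^±(t) = t^{-g}·det(t V^± - (V^±)ᵀ)` factors as `f^±(t)·f^±(t⁻¹)` for some
integer polynomial `f^±`. -/
theorem fox_milnor_of_null_concordant (g : ℕ)
    (Vp Vm : Matrix (Fin (2 * g)) (Fin (2 * g)) ℤ)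
    (hnc : ∃ P : Matrix (Fin (2 * g)) (Fin (2 * g)) ℤ,
      (P.det = 1 ∨ P.det = -1) ∧
      (∀ i j : Fin (2 * g), (i : ℕ) < g → (j : ℕ) < g → (P * Vp * Pᵀ) i j = 0) ∧
      (∀ i j : Fin (2 * g), (i : ℕ) < g → (j : ℕ) < g → (P * Vm * Pᵀ) i j = 0)) :
    ∃ fp fm : Polynomial ℤ,
      (T (-(g : ℤ)) : LaurentPolynomial ℤ) *
          ((T 1 : LaurentPolynomial ℤ) • Vp.map (Int.cast : ℤ → LaurentPolynomial ℤ) -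
            (Vp.map (Int.cast : ℤ → LaurentPolynomial ℤ))ᵀ).det =
        Polynomial.eval₂ (Int.castRingHom (LaurentPolynomial ℤ)) (T 1) fp *
          Polynomial.eval₂ (Int.castRingHom (LaurentPolynomial ℤ)) (T (-1)) fp ∧
      (T (-(g : ℤ)) : LaurentPolynomial ℤ) *
          ((T 1 : LaurentPolynomial ℤ) • Vm.map (Int.cast : ℤ → LaurentPolynomial ℤ) -
            (Vm.map (Int.cast : ℤ → LaurentPolynomial ℤ))ᵀ).det =
        Polynomial.eval₂ (Int.castRingHom (LaurentPolynomial ℤ)) (T 1) fm *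
          Polynomial.eval₂ (Int.castRingHom (LaurentPolynomial ℤ)) (T (-1)) fm := by
  obtain ⟨P, hP, hVp, hVm⟩ := hnc
  obtain ⟨fp, hfp⟩ := exists_alexander_factorization_of_congr_zero_block g Vp P hP hVp
  obtain ⟨fm, hfm⟩ := exists_alexander_factorization_of_congr_zero_block g Vm P hP hVm
  exact ⟨fp, fm, hfp, hfm⟩
end
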